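/- Let q_n be a sequence of positive integers with q_n dividing q_{n+1} and q_n < q_{n+1} for all n, and let δ_n = 1/(3·q_{n+1}). Then for each N ≥ 1, the intersection over n ≥ N of the sets ((1/q_n)ℤ + D_{δ_n})/ℤ in ℝ/ℤ equals ((1/q_N)ℤ)/ℤ, where (1/q)ℤ + D_δ denotes all reals of the form k/q + t with k ∈ ℤ and |t| < δ. -/

import Mathlib

/-!
Write `x = k/q_n + t_n` with `|t_n| < 1/(3 q_{n+1})`. Over the common denominator `q_{n+1}`, the
representations at levels `n` and `n + 1` differ by an integer multiple of `1/q_{n+1}` smaller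
than `1/q_{n+1}`, so `t_{n+1} = t_n`. Hence `|t_N| < 1/(3 q_{n+1})` for every `n ≥ N`, and
`t_N = 0` because `q_n → ∞`.
-/

open QuotientAddGroup Filter Topology

local notation "𝕋" => ℝ ⧸ AddSubgroup.zmultiples (1 : ℝ)

/-- The set `((1/q)ℤ + D_δ)/ℤ`. -/
def thickenedLattice (q : ℕ) (δ : ℝ) : Set 𝕋 :=
  {x | ∃ (k : ℤ) (t : ℝ), |t| < δ ∧ x = mk ((k : ℝ) / q + t)}

theorem exists_int_div_eq_int_div_of_dvd {q q' : ℕ} (h : q ∣ q') (hq' : q' ≠ 0) (k : ℤ) :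
    ∃ k' : ℤ, (k : ℝ) / q = k' / q' := by
  obtain ⟨c, rfl⟩ := h
  have hc : (c : ℝ) ≠ 0 := by exact_mod_cast right_ne_zero_of_mul hq'
  exact ⟨k * c, by push_cast; rw [mul_div_mul_right _ _ hc]⟩

theorem eq_of_mk_int_div_add_eq {q : ℕ} {k k' : ℤ} {t t' : ℝ}
    (ht : |t| < 1 / (2 * q)) (ht' : |t'| < 1 / (2 * q))
    (h : (mk ((k : ℝ) / q + t) : 𝕋) = mk ((k' : ℝ) / q + t')) : t = t' := by
  have hq : (0 : ℝ) < q := by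
    have := (abs_nonneg t).trans_lt ht
    rw [one_div_pos] at this
    linarith
  obtain ⟨m, hm⟩ := AddSubgroup.mem_zmultiples_iff.mp (QuotientAddGroup.eq.mp h)
  rw [zsmul_one] at hm
  have hd : ((k' - k - m * q : ℤ) : ℝ) / q = t - t' := by
    push_cast
    field_simp
    field_simp at hm
    linarith
  have hdiff : |t - t'| < 1 / q := calc
    |t - t'| ≤ |t| + |t'| := abs_sub _ _
    _ < 1 / (2 * q) + 1 / (2 * q) := add_lt_add ht ht'
    _ = 1 / q := by field_simp; ring
  rw [← hd, abs_div, abs_of_pos hq, div_lt_div_iff_of_pos_right hq] at hdiff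
  have hd0 : k' - k - m * q = 0 := Int.abs_lt_one_iff.mp (by exact_mod_cast hdiff)
  rw [hd0, Int.cast_zero, zero_div] at hd
  linarith

theorem one_div_three_mul_lt_one_div_two_mul {a b : ℝ} (ha : 0 < a) (hab : a ≤ b) :
    1 / (3 * b) < 1 / (2 * a) :=
  one_div_lt_one_div_of_lt (by positivity) (by linarith)

section DivisibilityChain

variable {q : ℕ → ℕ}

theorem exists_int_div_eq_int_div_of_le (hdvd : ∀ n, q n ∣ q (n + 1))
    (hlt : ∀ n, q n < q (n + 1)) {N n : ℕ} (hn : N ≤ n) (k : ℤ) :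
    ∃ k' : ℤ, (k : ℝ) / q N = k' / q n := by
  induction n, hn using Nat.le_induction with
  | base => exact ⟨k, rfl⟩
  | succ n _ ih =>
    obtain ⟨k', hk'⟩ := ih
    obtain ⟨k'', hk''⟩ :=
      exists_int_div_eq_int_div_of_dvd (hdvd n) (Nat.ne_zero_of_lt (hlt n)) k'
    exact ⟨k'', hk'.trans hk''⟩

theorem tendsto_one_div_three_mul_succ (hlt : ∀ n, q n < q (n + 1)) :
    Tendsto (fun n ↦ 1 / (3 * (q (n + 1) : ℝ))) atTop (𝓝 0) := by
  have hq : Tendsto (fun n ↦ (q (n + 1) : ℝ)) atTop atTop :=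
    tendsto_natCast_atTop_atTop.comp
      ((strictMono_nat_of_lt_succ hlt).tendsto_atTop.comp (tendsto_add_atTop_nat 1))
  simp only [one_div]
  exact (hq.const_mul_atTop three_pos).inv_tendsto_atTop

theorem abs_lt_of_forall_mem_thickenedLattice (hdvd : ∀ n, q n ∣ q (n + 1))
    (hlt : ∀ n, q n < q (n + 1)) {N : ℕ} {x : 𝕋}
    (hx : ∀ n, N ≤ n → x ∈ thickenedLattice (q n) (1 / (3 * q (n + 1))))
    {k : ℤ} {t : ℝ} (hxt : x = mk ((k : ℝ) / q N + t)) (ht : |t| < 1 / (3 * q (N + 1)))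
    {n : ℕ} (hn : N ≤ n) : |t| < 1 / (3 * q (n + 1)) := by
  suffices ∃ k : ℤ, x = mk ((k : ℝ) / q n + t) ∧ |t| < 1 / (3 * q (n + 1)) by
    obtain ⟨_, _, h⟩ := this
    exact h
  induction n, hn using Nat.le_induction with
  | base => exact ⟨k, hxt, ht⟩
  | succ n hn ih =>
    obtain ⟨k', hxk', ht'⟩ := ih
    obtain ⟨k'', hk''⟩ := exists_int_div_eq_int_div_of_le hdvd hlt (Nat.le_succ n) k'
    obtain ⟨l, s, hs, hxl⟩ := hx (n + 1) (by omega)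
    have hq : (0 : ℝ) < q (n + 1) := by exact_mod_cast Nat.zero_lt_of_lt (hlt n)
    have hq_le : (q (n + 1) : ℝ) ≤ q (n + 1 + 1) := by exact_mod_cast (hlt (n + 1)).le
    have hts : t = s :=
      eq_of_mk_int_div_add_eq (k := k'') (k' := l)
        ((one_div_three_mul_lt_one_div_two_mul hq le_rfl).trans' ht')
        ((one_div_three_mul_lt_one_div_two_mul hq hq_le).trans' hs)
        (by rw [← hk'', ← hxk', hxl])
    subst hts
    exact ⟨l, hxl, hs⟩

end DivisibilityChain

theorem stmt15_general (q : ℕ → ℕ) (hdvd : ∀ n, q n ∣ q (n + 1))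
    (hlt : ∀ n, q n < q (n + 1)) (N : ℕ) :
    (⋂ (n : ℕ) (_ : N ≤ n),
        {x : ℝ ⧸ AddSubgroup.zmultiples (1 : ℝ) | ∃ (k : ℤ) (t : ℝ),
          |t| < 1 / (3 * (q (n + 1) : ℝ)) ∧
          x = QuotientAddGroup.mk ((k : ℝ) / (q n : ℝ) + t)}) =
      {x : ℝ ⧸ AddSubgroup.zmultiples (1 : ℝ) | ∃ k : ℤ,
        x = QuotientAddGroup.mk ((k : ℝ) / (q N : ℝ))} := by
  change ⋂ (n : ℕ) (_ : N ≤ n), thickenedLattice (q n) (1 / (3 * q (n + 1))) = _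
  ext x
  simp only [Set.mem_iInter, Set.mem_ofPred_eq]
  constructor
  · intro hx
    obtain ⟨k, t, ht, rfl⟩ := hx N le_rfl
    have hbound : ∀ᶠ n in atTop, |t| ≤ 1 / (3 * (q (n + 1) : ℝ)) := eventually_atTop.2
      ⟨N, fun n hn ↦ (abs_lt_of_forall_mem_thickenedLattice hdvd hlt hx rfl ht hn).le⟩
    have ht0 : t = 0 :=
      abs_nonpos_iff.mp (ge_of_tendsto (tendsto_one_div_three_mul_succ hlt) hbound)
    exact ⟨k, by rw [ht0, add_zero]⟩
  · rintro ⟨k, rfl⟩ n hn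
    obtain ⟨k', hk'⟩ := exists_int_div_eq_int_div_of_le hdvd hlt hn k
    have hq : (0 : ℝ) < q (n + 1) := by exact_mod_cast Nat.zero_lt_of_lt (hlt n)
    exact ⟨k', 0, by rw [abs_zero]; positivity, by rw [add_zero, hk']⟩

/-- For `q_n ∣ q_{n+1}`, `q_n < q_{n+1}` and `δ_n = 1/(3q_{n+1})`, the intersection over
`n ≥ N` of the `δ_n`-neighbourhoods of `(1/q_n)ℤ` in ℝ/ℤ equals `((1/q_N)ℤ)/ℤ`. -/
theorem stmt15 (q : ℕ → ℕ) (hpos : ∀ n, 0 < q n) (hdvd : ∀ n, q n ∣ q (n + 1))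
    (hlt : ∀ n, q n < q (n + 1)) (N : ℕ) (hN : 1 ≤ N) :
    (⋂ (n : ℕ) (_ : N ≤ n),
        {x : ℝ ⧸ AddSubgroup.zmultiples (1 : ℝ) | ∃ (k : ℤ) (t : ℝ),
          |t| < 1 / (3 * (q (n + 1) : ℝ)) ∧
          x = QuotientAddGroup.mk ((k : ℝ) / (q n : ℝ) + t)}) =
      {x : ℝ ⧸ AddSubgroup.zmultiples (1 : ℝ) | ∃ k : ℤ,
        x = QuotientAddGroup.mk ((k : ℝ) / (q N : ℝ))} :=
  stmt15_general q hdvd hlt N
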